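/- Let p be an odd prime, let a, b ∈ ℂ_p with R = |a − b|_p > 0, and suppose f is holomorphic on the closed disc D⁺(a,R) = {x ∈ ℂ_p : |x − a|_p ≤ R}, i.e. f is given by a single power series converging on all of D⁺(a,R). Then for every interlocked family Φ of path sequences, ∫_{𝒜(a,b),Φ} f(x) dx = 0. -/

import Mathlib

/-!
Throughout, `K` plays the role of `ℂ_p`, the completion of an algebraic closure of `ℚ_p`:
it is a complete, algebraically closed, nonarchimedean (ultrametric) normed field equipped
with an isometric `ℚ_[p]`-algebra structure (hypothesis `hKext`).
-/

open scoped BigOperators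

/-- A *path sequence*: a function defined (positive-valued and strictly increasing)
for `k ≥ k₀`, for some positive integer `k₀`. -/
structure PathSeq where
  toFun : ℕ → ℕ
  k₀ : ℕ
  k₀_pos : 0 < k₀
  pos : ∀ k, k₀ ≤ k → 0 < toFun k
  mono : ∀ k l, k₀ ≤ k → k < l → toFun k < toFun l

/-- The Riemann-type sum `A_{f,φ}(k)` (with `N = φ(k)`):
`p^{-N} ∑_ζ (b - a) ζ · f (a + (b - a) ζ)`, `ζ` ranging over the `p^N`-th roots of unity. -/
noncomputable def Asum (p : ℕ) (K : Type*) [NormedField K] (a b : K) (f : K → K) (N : ℕ) : K :=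
  ((p : K) ^ N)⁻¹ *
    ∑ ζ ∈ Polynomial.nthRootsFinset (p ^ N) (1 : K), (b - a) * ζ * f (a + (b - a) * ζ)

/-- `ψ` is, for `k ≥ k₀`, a subsequence of the path sequence `φ`. -/
def SubseqFrom (ψ φ : PathSeq) (k₀ : ℕ) : Prop :=
  ∃ σ : ℕ → ℕ, (∀ k l, k₀ ≤ k → k < l → σ k < σ l) ∧
    ∀ k, k₀ ≤ k → φ.k₀ ≤ σ k ∧ ψ.toFun k = φ.toFun (σ k)

/-- An *interlocked* family of path sequences: nonempty, and any two members have a common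
member-subsequence. -/
def Interlocked (Φ : Set PathSeq) : Prop :=
  Φ.Nonempty ∧ ∀ φ₁ ∈ Φ, ∀ φ₂ ∈ Φ, ∃ φ₃ ∈ Φ, ∃ k₀ : ℕ, 0 < k₀ ∧
    SubseqFrom φ₃ φ₁ k₀ ∧ SubseqFrom φ₃ φ₂ k₀

/-- `∫_{𝒜(a,b),Φ} f(x) dx = L`: for every `ε > 0` there are `φ ∈ Φ` and `M` such that
`|A_{f,φ}(k) - L| < ε` for all `k > M` (in the domain of `φ`). -/
def HasIntegral (p : ℕ) (K : Type*) [NormedField K] (a b : K) (f : K → K)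
    (Φ : Set PathSeq) (L : K) : Prop :=
  ∀ ε : ℝ, 0 < ε → ∃ φ ∈ Φ, ∃ M : ℕ, φ.k₀ ≤ M ∧
    ∀ k, M < k → ‖Asum p K a b f (φ.toFun k) - L‖ < ε

/-- `f` is holomorphic on `S`: its values on `S` are given by the single power series with
coefficients `c`, centered at `b`, convergent on `S`. -/
def HolomorphicOn' (K : Type*) [NormedField K] (c : ℕ → K) (b : K) (f : K → K)
    (S : Set K) : Prop :=
  ∀ x ∈ S, Summable (fun n : ℕ => c n * (x - b) ^ n) ∧ f x = ∑' n : ℕ, c n * (x - b) ^ n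

/-- The arc `𝒜(a,b)`: the open disc of radius `R = |a - b|` around `b`. -/
def arc (K : Type*) [NormedField K] (a b : K) : Set K := {x : K | ‖x - b‖ < ‖a - b‖}

/-- `c` are controlled coefficients of order `β` (for the radius `R`). -/
def Controlled (K : Type*) [NormedField K] (c : ℕ → K) (R β : ℝ) : Prop :=
  ∃ M n₀ : ℝ, 0 < n₀ ∧ ∀ n : ℕ, n₀ < (n : ℝ) → ‖c n‖ * R ^ n < M * (n : ℝ) ^ β

/-- The interlocked family `Φ_α = {k ↦ α + λ k : λ ∈ ℤ⁺}`. -/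
def PhiAlpha (α : ℕ) : Set PathSeq :=
  {φ : PathSeq | ∃ lam : ℕ, 0 < lam ∧ ∀ k : ℕ, φ.toFun k = α + lam * k}

/-!
Expanding `f` in its power series around `a` and using the orthogonality of the `p^N`-th roots
of unity, `A_{f,φ}(k)` is the sum of the terms `cₙ (b - a)ⁿ⁺¹` with `p^{φ(k)} ∣ n + 1`. These
terms tend to `0` because the series converges at `b`, and by the ultrametric inequality their
sum is bounded by the largest of them, whose index is at least `p^{φ(k)} - 1 → ∞`.
-/

open Filter Topology Polynomial

theorem sum_nthRootsFinset_pow {K : Type*} [Field K] {n : ℕ} {ζ₀ : K}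
    (hζ₀ : IsPrimitiveRoot ζ₀ n) (hn : 0 < n) (m : ℕ) :
    ∑ ζ ∈ nthRootsFinset n (1 : K), ζ ^ m = if n ∣ m then (n : K) else 0 := by
  split_ifs with hdvd
  · obtain ⟨q, rfl⟩ := hdvd
    have hone : ∀ ζ ∈ nthRootsFinset n (1 : K), ζ ^ (n * q) = 1 := fun ζ hζ => by
      rw [pow_mul, (mem_nthRootsFinset hn _).mp hζ, one_pow]
    rw [Finset.sum_congr rfl hone, Finset.sum_const, hζ₀.card_nthRootsFinset, nsmul_one]
  · -- multiplication by `ζ₀` permutes the roots of unity and scales the sum by `ζ₀ ^ m ≠ 1`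
    have hζ₀m : ζ₀ ^ m ≠ 1 := fun h => hdvd ((hζ₀.pow_eq_one_iff_dvd m).mp h)
    have hζ₀inv : ζ₀⁻¹ ∈ nthRootsFinset n (1 : K) := by
      rw [mem_nthRootsFinset hn, inv_pow, hζ₀.pow_eq_one, inv_one]
    have hmul : ∀ {η ζ : K}, η ∈ nthRootsFinset n (1 : K) → ζ ∈ nthRootsFinset n (1 : K) →
        η * ζ ∈ nthRootsFinset n (1 : K) := fun hη hζ => by
      simpa using mul_mem_nthRootsFinset hη hζ
    have hinv : ζ₀ ^ m * ∑ ζ ∈ nthRootsFinset n (1 : K), ζ ^ m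
        = ∑ ζ ∈ nthRootsFinset n (1 : K), ζ ^ m := by
      have hζ₀0 : ζ₀ ≠ 0 := hζ₀.ne_zero hn.ne'
      rw [Finset.mul_sum]
      refine Finset.sum_nbij' (ζ₀ * ·) (ζ₀⁻¹ * ·) (fun ζ hζ => hmul (hζ₀.mem_nthRootsFinset hn) hζ)
        (fun ζ hζ => hmul hζ₀inv hζ) (fun ζ _ => by field_simp) (fun ζ _ => by field_simp)
        (fun ζ _ => by rw [mul_pow])
    have hzero : (ζ₀ ^ m - 1) * ∑ ζ ∈ nthRootsFinset n (1 : K), ζ ^ m = 0 := by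
      linear_combination hinv
    exact (mul_eq_zero.mp hzero).resolve_left (sub_ne_zero.mpr hζ₀m)

theorem sum_nthRootsFinset_mul_eq_tsum_indicator {K : Type*} [NormedField K] [IsAlgClosed K]
    [CharZero K] {a b : K} {c : ℕ → K} {f : K → K}
    (hf : HolomorphicOn' K c a f {x : K | ‖x - a‖ ≤ ‖a - b‖}) {n : ℕ} (hn : 0 < n) :
    ∑ ζ ∈ nthRootsFinset n (1 : K), (b - a) * ζ * f (a + (b - a) * ζ)
      = n * ∑' m, {m | n ∣ m + 1}.indicator (fun m => c m * (b - a) ^ (m + 1)) m := by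
  have : NeZero (n : K) := ⟨Nat.cast_ne_zero.mpr hn.ne'⟩
  obtain ⟨ζ₀, hζ₀⟩ := HasEnoughRootsOfUnity.exists_primitiveRoot K n
  have hseries : ∀ ζ ∈ nthRootsFinset n (1 : K),
      Summable (fun m => c m * ((b - a) * ζ) ^ m) ∧
        f (a + (b - a) * ζ) = ∑' m, c m * ((b - a) * ζ) ^ m := fun ζ hζ => by
    have hnorm : ‖ζ‖ = 1 := by
      rw [← pow_eq_one_iff_of_nonneg (norm_nonneg ζ) hn.ne', ← norm_pow,
        (mem_nthRootsFinset hn _).mp hζ, norm_one]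
    simpa using hf (a + (b - a) * ζ) (by simp [hnorm, norm_sub_rev])
  have hterm : ∀ ζ m, (b - a) * ζ * (c m * ((b - a) * ζ) ^ m)
      = c m * (b - a) ^ (m + 1) * ζ ^ (m + 1) := fun ζ m => by rw [mul_pow]; ring
  have hinner : ∀ m, ∑ ζ ∈ nthRootsFinset n (1 : K), c m * (b - a) ^ (m + 1) * ζ ^ (m + 1)
      = n * {m | n ∣ m + 1}.indicator (fun m => c m * (b - a) ^ (m + 1)) m := fun m => by
    rw [← Finset.mul_sum, sum_nthRootsFinset_pow hζ₀ hn]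
    by_cases hdvd : n ∣ m + 1
    · rw [if_pos hdvd, Set.indicator_of_mem (s := {m | n ∣ m + 1}) hdvd, mul_comm]
    · rw [if_neg hdvd, Set.indicator_of_notMem (s := {m | n ∣ m + 1}) hdvd, mul_zero, mul_zero]
  calc ∑ ζ ∈ nthRootsFinset n (1 : K), (b - a) * ζ * f (a + (b - a) * ζ)
      = ∑ ζ ∈ nthRootsFinset n (1 : K), ∑' m, c m * (b - a) ^ (m + 1) * ζ ^ (m + 1) := by
        refine Finset.sum_congr rfl fun ζ hζ => ?_
        simp only [(hseries ζ hζ).2, ← tsum_mul_left, hterm]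
    _ = ∑' m, ∑ ζ ∈ nthRootsFinset n (1 : K), c m * (b - a) ^ (m + 1) * ζ ^ (m + 1) := by
        refine (Summable.tsum_finsetSum fun ζ hζ => ?_).symm
        simpa only [hterm] using (hseries ζ hζ).1.mul_left ((b - a) * ζ)
    _ = n * ∑' m, {m | n ∣ m + 1}.indicator (fun m => c m * (b - a) ^ (m + 1)) m := by
        simp only [hinner, tsum_mul_left]

theorem asum_eq_tsum_indicator {p : ℕ} (hp : 0 < p) {K : Type*} [NormedField K] [IsAlgClosed K]
    [CharZero K] {a b : K} {c : ℕ → K} {f : K → K}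
    (hf : HolomorphicOn' K c a f {x : K | ‖x - a‖ ≤ ‖a - b‖}) (N : ℕ) :
    Asum p K a b f N
      = ∑' m, {m | p ^ N ∣ m + 1}.indicator (fun m => c m * (b - a) ^ (m + 1)) m := by
  rw [Asum, sum_nthRootsFinset_mul_eq_tsum_indicator hf (pow_pos hp N), Nat.cast_pow,
    inv_mul_cancel_left₀ (pow_ne_zero N (Nat.cast_ne_zero.mpr hp.ne'))]

theorem tendsto_tsum_indicator_zero {E : Type*} [NormedAddCommGroup E] [IsUltrametricDist E]
    {g : ℕ → E} (hg : Tendsto g atTop (𝓝 0)) {s : ℕ → Set ℕ} (hs : ∀ N, s N ⊆ Set.Ici N) :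
    Tendsto (fun N => ∑' n, (s N).indicator g n) atTop (𝓝 0) := by
  rw [NormedAddGroup.tendsto_nhds_zero] at hg ⊢
  intro ε hε
  obtain ⟨M, hM⟩ := eventually_atTop.mp (hg (ε / 2) (half_pos hε))
  filter_upwards [eventually_ge_atTop M] with N hN
  refine (IsUltrametricDist.norm_tsum_le_of_forall_le_of_nonneg (half_pos hε).le fun n => ?_)
    |>.trans_lt (half_lt_self hε)
  by_cases hn : n ∈ s N
  · rw [Set.indicator_of_mem hn]
    exact (hM n (hN.trans (hs N hn))).le
  · rw [Set.indicator_of_notMem hn, norm_zero]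
    exact (half_pos hε).le

theorem tendsto_asum_zero {p : ℕ} (hp : 1 < p) {K : Type*} [NormedField K] [IsAlgClosed K]
    [CharZero K] [IsUltrametricDist K] {a b : K} {c : ℕ → K} {f : K → K}
    (hf : HolomorphicOn' K c a f {x : K | ‖x - a‖ ≤ ‖a - b‖}) :
    Tendsto (Asum p K a b f) atTop (𝓝 0) := by
  have hsummable : Summable fun m => c m * (b - a) ^ (m + 1) := by
    simpa [pow_succ, mul_assoc] using
      (hf b (by simp [norm_sub_rev])).1.mul_right (b - a)
  have hs : ∀ N, {m | p ^ N ∣ m + 1} ⊆ Set.Ici N := fun N m hm =>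
    Nat.lt_succ_iff.mp ((Nat.lt_pow_self hp).trans_le (Nat.le_of_dvd m.succ_pos hm))
  rw [funext (asum_eq_tsum_indicator (zero_lt_one.trans hp) hf)]
  exact tendsto_tsum_indicator_zero hsummable.tendsto_atTop_zero hs

theorem PathSeq.tendsto_atTop (φ : PathSeq) : Tendsto φ.toFun atTop atTop :=
  (tendsto_add_atTop_iff_nat φ.k₀).mp <| StrictMono.tendsto_atTop fun _ _ hkl =>
    φ.mono _ _ (Nat.le_add_left _ _) (Nat.add_lt_add_right hkl _)

theorem hasIntegral_of_tendsto {p : ℕ} {K : Type*} [NormedField K] {a b : K} {f : K → K}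
    {Φ : Set PathSeq} (hΦ : Φ.Nonempty) {L : K} (hL : Tendsto (Asum p K a b f) atTop (𝓝 L)) :
    HasIntegral p K a b f Φ L := by
  intro ε hε
  obtain ⟨φ, hφ⟩ := hΦ
  obtain ⟨M, hM⟩ := eventually_atTop.mp
    ((hL.comp φ.tendsto_atTop).eventually (Metric.ball_mem_nhds L hε))
  exact ⟨φ, hφ, max φ.k₀ M, le_max_left _ _, fun k hk => by
    simpa [dist_eq_norm] using hM k (le_max_right _ _ |>.trans hk.le)⟩

theorem stmt_5_general (p : ℕ) [Fact (Nat.Prime p)]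
    (K : Type*) [NormedField K] [IsAlgClosed K] [IsUltrametricDist K]
    [Algebra ℚ_[p] K]
    (a b : K) (c : ℕ → K) (f : K → K)
    (hf : HolomorphicOn' K c a f {x : K | ‖x - a‖ ≤ ‖a - b‖})
    (Φ : Set PathSeq) (hΦ : Interlocked Φ) :
    HasIntegral p K a b f Φ 0 := by
  have : CharZero K := charZero_of_injective_algebraMap (algebraMap ℚ_[p] K).injective
  exact hasIntegral_of_tendsto hΦ.1 (tendsto_asum_zero (Fact.out : p.Prime).one_lt hf)

/-- If `f` is holomorphic on the closed disc `D⁺(a,R)` with `R = |a-b| > 0`,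
then for every interlocked family `Φ`, `∫_{𝒜(a,b),Φ} f(x) dx = 0`. -/
theorem stmt_5 (p : ℕ) [Fact (Nat.Prime p)] (hp2 : p ≠ 2)
    (K : Type*) [NormedField K] [CompleteSpace K] [IsAlgClosed K] [IsUltrametricDist K]
    [Algebra ℚ_[p] K] (hKext : ∀ q : ℚ_[p], ‖algebraMap ℚ_[p] K q‖ = ‖q‖)
    (a b : K) (hR : 0 < ‖a - b‖) (c : ℕ → K) (f : K → K)
    (hf : HolomorphicOn' K c a f {x : K | ‖x - a‖ ≤ ‖a - b‖})
    (Φ : Set PathSeq) (hΦ : Interlocked Φ) :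
    HasIntegral p K a b f Φ 0 :=
  stmt_5_general p K a b c f hf Φ hΦ
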